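/- arXiv:1907.05622 — 5 statements merged into one kernel-verified Lean document; each statement's English description precedes it below -/
import Mathlib

section
/- Let u be a monomial of degree d in n variables distinct from x_n^d. Write u = v·x_n^{a_n} where x_n does not divide v, and let m = max(v) ≤ n−1. Then the immediate lexicographic successor of u among degree-d monomials is (v/x_m)·x_{m+1}^{a_n+1}. -/
/-- Lexicographic "strictly greater" on exponent vectors of monomials:
the leftmost nonzero coordinate of `a - b` is positive. -/
def LexGT {n : ℕ} (a b : Fin n → ℕ) : Prop :=
  ∃ i : Fin n, (∀ j : Fin n, j < i → a j = b j) ∧ b i < a i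

/-- Lexicographic "greater or equal". -/
def LexGE {n : ℕ} (a b : Fin n → ℕ) : Prop := LexGT a b ∨ a = b

/-- Total degree of a monomial given by its exponent vector. -/
def deg {n : ℕ} (a : Fin n → ℕ) : ℕ := ∑ i, a i

/-- The lexsegment `L(u)`: all monomials of the same degree that are `≥_lex u`. -/
def Lseg {n : ℕ} (u : Fin n → ℕ) : Set (Fin n → ℕ) :=
  {v | deg v = deg u ∧ LexGE v u}

/-- The half-open lexinterval `L*(u₁,u₂) = {v : u₁ >_lex v ≥_lex u₂}`. -/
def Lstar {n : ℕ} (u₁ u₂ : Fin n → ℕ) : Set (Fin n → ℕ) :=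
  {v | deg v = deg u₁ ∧ LexGT u₁ v ∧ LexGE v u₂}

/-- The elementary Borel move `u ↦ x_i · u / x_j`. -/
def move {n : ℕ} (u : Fin n → ℕ) (i j : Fin n) : Fin n → ℕ :=
  fun k => u k + (if k = i then 1 else 0) - (if k = j then 1 else 0)

/-- A set of monomials is Borel-stable (strongly stable). -/
def BorelStable {n : ℕ} (B : Set (Fin n → ℕ)) : Prop :=
  ∀ u ∈ B, ∀ i j : Fin n, i ≤ j → 1 ≤ u j → move u i j ∈ B

/-- `B(u)`: the smallest Borel-stable set of monomials containing `u`. -/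
def borelSet {n : ℕ} (u : Fin n → ℕ) : Set (Fin n → ℕ) :=
  ⋂₀ {B : Set (Fin n → ℕ) | BorelStable B ∧ u ∈ B}

/-- The gaps of `u`: `L(u) \ B(u)`. -/
def gaps {n : ℕ} (u : Fin n → ℕ) : Set (Fin n → ℕ) := Lseg u \ borelSet u

/-- `max(u)`: the largest (1-based) index of a variable dividing `u` (0 if `u = 1`). -/
def maxIdx {n : ℕ} (u : Fin n → ℕ) : ℕ :=
  (Finset.univ.filter fun i : Fin n => 0 < u i).sup fun i => (i : ℕ) + 1

/-- `min(u)`: the smallest (1-based) index of a variable dividing `u`. -/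
noncomputable def minIdx {n : ℕ} (u : Fin n → ℕ) : ℕ :=
  sInf {m | ∃ i : Fin n, 0 < u i ∧ m = (i : ℕ) + 1}

/-- The maxgen monomial of a set `B` of monomials: its exponent at `i`
is the number of `w ∈ B` with `max(w) = i+1` (1-based). -/
noncomputable def maxgen {n : ℕ} (B : Set (Fin n → ℕ)) : Fin n → ℕ :=
  fun i => (B ∩ {w | maxIdx w = (i : ℕ) + 1}).ncard

/-- `w` is the immediate lexicographic predecessor of `u` among monomials
of the same degree: the least monomial strictly greater than `u`. -/
def IsPred {n : ℕ} (w u : Fin n → ℕ) : Prop :=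
  deg w = deg u ∧ LexGT w u ∧
    ∀ z : Fin n → ℕ, deg z = deg u → LexGT z u → LexGE z w

/-- `w` is the immediate lexicographic successor of `u` among monomials
of the same degree: the greatest monomial strictly smaller than `u`. -/
def IsSucc {n : ℕ} (w u : Fin n → ℕ) : Prop :=
  deg w = deg u ∧ LexGT u w ∧
    ∀ z : Fin n → ℕ, deg z = deg u → LexGT u z → LexGE w z

lemma deg_add {n : ℕ} (a b : Fin n → ℕ) : deg (a + b) = deg a + deg b := by
  simp [deg, Finset.sum_add_distrib]

lemma deg_single {n : ℕ} (i : Fin n) (c : ℕ) : deg (Pi.single i c) = c := by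
  simp [deg]

lemma deg_split {n : ℕ} (a : Fin n → ℕ) (k : Fin n) :
    deg a = (∑ j ∈ Finset.univ.filter (· ≤ k), a j)
      + ∑ j ∈ Finset.univ.filter (fun j => ¬ j ≤ k), a j :=
  (Finset.sum_filter_add_sum_filter_not _ _ _).symm


/-- for `u = v·x_n^{a_n} ≠ x_n^d` with `x_n ∤ v` and `m = max(v) ≤ n-1`,
the immediate lexicographic successor of `u` is `(v/x_m)·x_{m+1}^{a_n+1}`. -/
theorem stmt5 {n d : ℕ} (hn : 0 < n) (u v : Fin n → ℕ) (hu : deg u = d)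
    (hne : u ≠ Pi.single (⟨n - 1, by omega⟩ : Fin n) d)
    (an : ℕ) (huv : u = v + Pi.single (⟨n - 1, by omega⟩ : Fin n) an)
    (hvn : v ⟨n - 1, by omega⟩ = 0)
    (m : Fin n) (hm : maxIdx v = (m : ℕ) + 1) (hmn : (m : ℕ) + 1 < n) :
    IsSucc ((v - Pi.single m 1) + Pi.single (⟨(m : ℕ) + 1, hmn⟩ : Fin n) (an + 1)) u := by
  have hn1 : n - 1 < n := by omega
  set N : Fin n := ⟨n - 1, hn1⟩ with hNdef
  set m1 : Fin n := ⟨(m : ℕ) + 1, hmn⟩ with hm1def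
  set w : Fin n → ℕ := (v - Pi.single m 1) + Pi.single m1 (an + 1) with hwdef
  have hm1val : (m1 : ℕ) = (m : ℕ) + 1 := rfl
  have hNval : (N : ℕ) = n - 1 := rfl
  have vne : ∀ a b : Fin n, (a : ℕ) ≠ (b : ℕ) → a ≠ b :=
    fun a b h hab => h (congrArg Fin.val hab)
  have hmm1 : m ≠ m1 := vne _ _ (by omega)
  have hmN : m ≠ N := vne _ _ (by rw [hNval]; omega)
  -- u pointwise
  have huk : ∀ k : Fin n, k ≠ N → u k = v k := by
    intro k hk; rw [huv]; simp [Pi.single_apply, hk]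
  have huN : u N = an := by rw [huv]; simp [hvn]
  -- v m > 0 and v j = 0 beyond m
  unfold maxIdx at hm
  have hfil : (Finset.univ.filter fun i : Fin n => 0 < v i).Nonempty := by
    by_contra h
    rw [Finset.not_nonempty_iff_eq_empty] at h
    rw [h] at hm; simp at hm
  obtain ⟨i0, hi0mem, hi0eq⟩ :=
    Finset.exists_mem_eq_sup _ hfil (fun i : Fin n => (i : ℕ) + 1)
  have hi0m : i0 = m := by
    rw [hm] at hi0eq; exact Fin.ext (by omega)
  have hvm : 0 < v m := by
    rw [← hi0m]; exact (Finset.mem_filter.mp hi0mem).2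
  have hv0 : ∀ j : Fin n, (m : ℕ) < (j : ℕ) → v j = 0 := by
    intro j hj
    by_contra h
    have hj' : j ∈ Finset.univ.filter fun i : Fin n => 0 < v i :=
      Finset.mem_filter.mpr ⟨Finset.mem_univ _, Nat.pos_of_ne_zero h⟩
    have h2 : (j : ℕ) + 1 ≤ (m : ℕ) + 1 := by
      have h3 := Finset.le_sup (f := fun i : Fin n => (i : ℕ) + 1) hj'
      rw [hm] at h3
      exact h3
    omega
  -- w pointwise
  have hwk : ∀ k : Fin n, k ≠ m → k ≠ m1 → w k = v k := by
    intro k h1 h2; rw [hwdef]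
    simp [Pi.single_apply, h1, h2]
  have hwm : w m = v m - 1 := by
    rw [hwdef]; simp [Pi.single_apply, hmm1]
  have hwm1 : w m1 = an + 1 := by
    have hv1 : v m1 = 0 := hv0 m1 (by omega)
    rw [hwdef]; simp [Pi.single_apply, Ne.symm hmm1, hv1]
  -- the key pointwise identities below m
  have key : ∀ j : Fin n, (j : ℕ) < (m : ℕ) → w j = v j ∧ u j = v j := by
    intro j hj
    have h1 : j ≠ m := vne _ _ (by omega)
    have h2 : j ≠ m1 := vne _ _ (by rw [hm1val]; omega)
    have h3 : j ≠ N := vne _ _ (by rw [hNval]; omega)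
    exact ⟨hwk j h1 h2, huk j h3⟩
  -- degrees
  have hvsplit : v = (v - Pi.single m 1) + Pi.single m 1 := by
    funext k
    by_cases hk : k = m
    · subst hk; simp [Pi.single_apply]; omega
    · simp [Pi.single_apply, hk]
  have hdw : deg w = deg u := by
    have h1 : deg v = deg (v - Pi.single m 1) + 1 := by
      conv_lhs => rw [hvsplit]
      rw [deg_add, deg_single]
    have h2 : deg u = deg v + an := by rw [huv, deg_add, deg_single]
    rw [hwdef, deg_add, deg_single]
    omega
  refine ⟨hdw, ⟨m, ?_, ?_⟩, ?_⟩
  · intro j hj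
    have hj' : (j : ℕ) < (m : ℕ) := hj
    rw [(key j hj').1, (key j hj').2]
  · rw [hwm, huk m hmN]; omega
  · -- minimality
    intro z hz hlz
    obtain ⟨i, hagree, hzi⟩ := hlz
    rcases lt_trichotomy i m with him | him | him
    · -- i < m
      left
      have him' : (i : ℕ) < (m : ℕ) := him
      refine ⟨i, ?_, ?_⟩
      · intro j hj
        have hj' : (j : ℕ) < (m : ℕ) := lt_trans (show (j:ℕ) < (i:ℕ) from hj) him'
        rw [(key j hj').1, ← (key j hj').2]
        exact hagree j hj
      · rw [(key i him').1, ← (key i him').2]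
        exact hzi
    · -- i = m
      rw [him] at hagree hzi
      rw [huk m hmN] at hzi
      have hagw : ∀ j : Fin n, j < m → w j = z j := by
        intro j hj
        have hj' : (j : ℕ) < (m : ℕ) := hj
        rw [(key j hj').1, ← (key j hj').2]
        exact hagree j hj
      rcases lt_trichotomy (z m) (v m - 1) with hzm | hzm | hzm
      · left; exact ⟨m, hagw, by rw [hwm]; exact hzm⟩
      · -- z m = w m : compare at m1 using degrees
        have hagwm1 : ∀ j : Fin n, j < m1 → w j = z j := by
          intro j hj
          have hj' : (j : ℕ) < (m : ℕ) + 1 := by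
            have := Fin.lt_def.mp hj; omega
          rcases lt_or_eq_of_le (Nat.lt_succ_iff.mp hj') with h | h
          · exact hagw j (Fin.lt_def.mpr h)
          · have : j = m := Fin.ext h
            subst this; rw [hwm, hzm]
        have hsw := deg_split w m1
        have hsz := deg_split z m1
        have hwt : (∑ j ∈ Finset.univ.filter (fun j : Fin n => ¬ j ≤ m1), w j) = 0 := by
          apply Finset.sum_eq_zero
          intro j hj
          rw [Finset.mem_filter] at hj
          have hjm1 : (m : ℕ) + 1 < (j : ℕ) := by
            have := Fin.le_def.not.mp hj.2; omega
          rw [hwk j (vne _ _ (by omega)) (vne _ _ (by rw [hm1val]; omega))]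
          exact hv0 j (by omega)
        rcases lt_trichotomy (z m1) (an + 1) with hz1 | hz1 | hz1
        · left; exact ⟨m1, hagwm1, by rw [hwm1]; exact hz1⟩
        · -- z = w
          right
          have hagw' : ∀ j : Fin n, j ≤ m1 → w j = z j := by
            intro j hj
            rcases lt_or_eq_of_le hj with h | h
            · exact hagwm1 j h
            · subst h; rw [hwm1, hz1]
          have heq : (∑ j ∈ Finset.univ.filter (· ≤ m1), w j)
              = ∑ j ∈ Finset.univ.filter (· ≤ m1), z j :=
            Finset.sum_congr rfl fun j hj => hagw' j (Finset.mem_filter.mp hj).2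
          have hzt : (∑ j ∈ Finset.univ.filter (fun j : Fin n => ¬ j ≤ m1), z j) = 0 := by
            rw [hz, ← hdw] at hsz
            omega
          funext j
          by_cases hj : j ≤ m1
          · exact hagw' j hj
          · have hjz : z j = 0 :=
              Finset.sum_eq_zero_iff.mp hzt j
                (Finset.mem_filter.mpr ⟨Finset.mem_univ _, hj⟩)
            have hjw : w j = 0 :=
              Finset.sum_eq_zero_iff.mp hwt j
                (Finset.mem_filter.mpr ⟨Finset.mem_univ _, hj⟩)
            rw [hjz, hjw]
        · -- z m1 > an + 1 : degree contradiction
          exfalso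
          have hlt : (∑ j ∈ Finset.univ.filter (· ≤ m1), w j)
              < ∑ j ∈ Finset.univ.filter (· ≤ m1), z j := by
            apply Finset.sum_lt_sum
            · intro j hj
              rcases lt_or_eq_of_le (Finset.mem_filter.mp hj).2 with h | h
              · exact le_of_eq (hagwm1 j h)
              · subst h; rw [hwm1]; omega
            · exact ⟨m1, Finset.mem_filter.mpr ⟨Finset.mem_univ _, le_refl _⟩,
                by rw [hwm1]; omega⟩
          rw [hz, ← hdw] at hsz
          omega
      · -- impossible: v m - 1 < z m < v m
        exfalso; omega
    · -- i > m : impossible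
      exfalso
      have him' : (m : ℕ) < (i : ℕ) := him
      by_cases hiN : i = N
      · subst hiN
        rw [huN] at hzi
        have hd : deg z = deg u := hz
        have hzsum : deg z = z N + ∑ j ∈ Finset.univ.erase N, z j :=
          (Finset.add_sum_erase _ _ (Finset.mem_univ N)).symm
        have husum : deg u = u N + ∑ j ∈ Finset.univ.erase N, u j :=
          (Finset.add_sum_erase _ _ (Finset.mem_univ N)).symm
        have heq : (∑ j ∈ Finset.univ.erase N, z j)
            = ∑ j ∈ Finset.univ.erase N, u j := by
          apply Finset.sum_congr rfl
          intro j hj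
          have hjne : j ≠ N := (Finset.mem_erase.mp hj).1
          have hjlt : j < N := by
            have h1 := j.isLt
            have h2 : (j : ℕ) ≠ n - 1 := fun h => hjne (Fin.ext (by rw [h, hNval]))
            exact Fin.lt_def.mpr (by rw [hNval]; omega)
          exact (hagree j hjlt).symm
        rw [huN] at husum
        omega
      · have hiN' : (i : ℕ) < n - 1 := by
          have h1 := i.isLt
          have h2 : (i : ℕ) ≠ n - 1 := fun h => hiN (Fin.ext (by rw [h, hNval]))
          omega
        rw [huk i hiN, hv0 i him'] at hzi
        omega
end

section
/- For all integers r, s ≥ 0, the cardinality of the smallest Borel-stable set containing x_2^r·x_3^s in K[x_1, x_2, x_3] equals binom(s+1, 2) + (r+1)(s+1). -/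
def S3 (r s : ℕ) : Set (Fin 3 → ℕ) :=
  {v | v 0 + v 1 + v 2 = r + s ∧ v 2 ≤ s}

lemma S3_stable (r s : ℕ) : BorelStable (S3 r s) := by
  rintro v ⟨hd, hc⟩ i j hij hj
  fin_cases i <;> fin_cases j <;>
    simp_all [move, S3, Fin.le_def, Set.mem_setOf_eq] <;> omega

lemma u_eq (r s : ℕ) :
    (Pi.single (1 : Fin 3) r + Pi.single (2 : Fin 3) s) = ![0, r, s] := by
  funext m; fin_cases m <;> simp [Pi.single, Function.update]

lemma mem_borel (r s : ℕ) (v : Fin 3 → ℕ) (hd : v 0 + v 1 + v 2 = r + s) (hc : v 2 ≤ s) :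
    v ∈ borelSet (Pi.single (1 : Fin 3) r + Pi.single (2 : Fin 3) s) := by
  rintro B ⟨hBs, hBu⟩
  rw [u_eq] at hBu
  have step1 : ∀ k, k ≤ s → ![0, r + k, s - k] ∈ B := by
    intro k
    induction k with
    | zero => intro _; simpa using hBu
    | succ k ih =>
      intro hk
      have h1 := hBs _ (ih (by omega)) 1 2 (by decide) (by show 1 ≤ s - k; omega)
      convert h1 using 1
      funext m; fin_cases m <;> simp [move] <;> omega
  have step2 : ∀ a m c, ![0, m, c] ∈ B → a ≤ m → ![a, m - a, c] ∈ B := by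
    intro a
    induction a with
    | zero => intro m c h _; simpa using h
    | succ a ih =>
      intro m c h ha
      have h1 := hBs _ (ih m c h (by omega)) 0 1 (by decide) (by show 1 ≤ m - a; omega)
      convert h1 using 1
      funext m'; fin_cases m' <;> simp [move] <;> omega
  have h1 := step1 (s - v 2) (by omega)
  have hsv : s - (s - v 2) = v 2 := by omega
  rw [hsv] at h1
  have h2 := step2 (v 0) (r + (s - v 2)) (v 2) h1 (by omega)
  have hv : v = ![v 0, r + (s - v 2) - v 0, v 2] := by
    funext m; fin_cases m <;> simp <;> omega
  rw [hv]; exact h2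

lemma borel_eq (r s : ℕ) :
    borelSet (Pi.single (1 : Fin 3) r + Pi.single (2 : Fin 3) s) = S3 r s := by
  apply le_antisymm
  · apply Set.sInter_subset_of_mem
    refine ⟨S3_stable r s, ?_⟩
    rw [u_eq]
    constructor <;> simp [S3]
  · rintro v ⟨hd, hc⟩
    exact mem_borel r s v hd hc

lemma sum_aux (r s : ℕ) :
    ∑ c ∈ Finset.range (s + 1), (r + s - c + 1)
      = Nat.choose (s + 1) 2 + (r + 1) * (s + 1) := by
  induction s generalizing r with
  | zero => simp
  | succ s ih =>
    rw [Finset.sum_range_succ]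
    have e1 : ∑ c ∈ Finset.range (s + 1), (r + (s + 1) - c + 1)
        = ∑ c ∈ Finset.range (s + 1), ((r + 1) + s - c + 1) := by
      apply Finset.sum_congr rfl
      intro c hc; simp at hc; omega
    rw [e1, ih (r + 1)]
    have e3 : r + (s + 1) - (s + 1) + 1 = r + 1 := by omega
    rw [e3]
    have e2 : Nat.choose (s + 1 + 1) 2 = (s + 1) + Nat.choose (s + 1) 2 := by
      rw [Nat.choose_succ_succ, Nat.choose_one_right]
    rw [e2]
    ring

lemma S3_eq_image (r s : ℕ) :
    S3 r s = ↑(((Finset.range (s + 1)).sigma (fun c => Finset.range (r + s - c + 1))).image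
      (fun p => ![r + s - p.1 - p.2, p.2, p.1])) := by
  ext v
  simp only [S3, Set.mem_setOf_eq, Finset.coe_image, Set.mem_image, Finset.mem_coe,
    Finset.mem_sigma, Finset.mem_range]
  constructor
  · rintro ⟨hd, hc⟩
    refine ⟨⟨v 2, v 1⟩, ⟨show v 2 < s + 1 by omega, show v 1 < r + s - v 2 + 1 by omega⟩, ?_⟩
    funext m; fin_cases m <;> simp <;> omega
  · rintro ⟨⟨c, b⟩, ⟨hc, hb⟩, rfl⟩
    simp only [show ((⟨c, b⟩ : (_ : ℕ) × ℕ)).fst = c from rfl,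
      show ((⟨c, b⟩ : (_ : ℕ) × ℕ)).snd = b from rfl] at *
    constructor <;> (norm_num [Matrix.cons_val_two]; omega)

lemma inj_aux (r s : ℕ) : Set.InjOn (fun p : (_ : ℕ) × ℕ => ![r + s - p.1 - p.2, p.2, p.1])
    ↑((Finset.range (s + 1)).sigma (fun c => Finset.range (r + s - c + 1))) := by
  rintro ⟨c, b⟩ _ ⟨c', b'⟩ _ h
  have h1 := congrFun h 1
  have h2 := congrFun h 2
  simp at h1 h2
  subst h1; subst h2; rfl

/-- in `K[x₁,x₂,x₃]`, `|B(x_2^r · x_3^s)| = C(s+1,2) + (r+1)(s+1)`. -/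
theorem stmt9 (r s : ℕ) :
    (borelSet (Pi.single (1 : Fin 3) r + Pi.single (2 : Fin 3) s)).ncard
      = Nat.choose (s + 1) 2 + (r + 1) * (s + 1) := by
  rw [borel_eq, S3_eq_image, Set.ncard_coe_finset,
    Finset.card_image_of_injOn (by simpa using inj_aux r s),
    Finset.card_sigma]
  simpa using sum_aux r s
end

section
/- Let w be a monomial in n variables with m = max(w), let r ≥ 1 be the exponent of x_m in w, and let v = w/x_m^r. Then B(w) is the disjoint union over i = 0, ..., r of the sets B(v·x_{m−1}^{r−i})·x_m^i. Consequently |B(w)| = Σ_{i=0}^{r} |B(v·x_{m−1}^{r−i})|. -/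
section Core
variable {n : ℕ}

/-- Inductive characterization of the Borel set. -/
inductive BC (u : Fin n → ℕ) : (Fin n → ℕ) → Prop
  | base : BC u u
  | step {w : Fin n → ℕ} (i j : Fin n) (hij : i ≤ j) (hj : 1 ≤ w j) (hw : BC u w) :
      BC u (move w i j)

theorem borelSet_stable (u : Fin n → ℕ) : BorelStable (borelSet u) := by
  intro w hw i j hij hj
  intro B hB
  exact hB.1 w (hw B hB) i j hij hj

theorem mem_borelSet_self (u : Fin n → ℕ) : u ∈ borelSet u := fun B hB => hB.2

theorem borelSet_eq_BC (u : Fin n → ℕ) : borelSet u = {z | BC u z} := by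
  apply Set.Subset.antisymm
  · intro z hz
    exact hz _ ⟨fun w hw i j hij hj => BC.step i j hij hj hw, BC.base⟩
  · intro z hz
    induction hz with
    | base => exact mem_borelSet_self u
    | step i j hij hj hw ih => exact borelSet_stable u _ ih i j hij hj

theorem deg_move {w : Fin n → ℕ} {i j : Fin n} (hj : 1 ≤ w j) : deg (move w i j) = deg w := by
  unfold deg move
  rw [Finset.sum_tsub_distrib]
  · rw [Finset.sum_add_distrib, Finset.sum_ite_eq' Finset.univ i (fun _ => 1),
      Finset.sum_ite_eq' Finset.univ j (fun _ => 1)]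
    simp
  · intro k _
    by_cases hk : k = j
    · subst hk; split_ifs <;> omega
    · simp [hk]

theorem deg_mem {u z : Fin n → ℕ} (hz : z ∈ borelSet u) : deg z = deg u := by
  rw [borelSet_eq_BC] at hz
  induction hz with
  | base => rfl
  | step i j hij hj hw ih => rw [deg_move hj, ih]

theorem borelSet_finite (u : Fin n → ℕ) : (borelSet u).Finite := by
  apply Set.Finite.subset (s := Set.pi Set.univ fun _ : Fin n => Set.Iic (deg u))
  · exact Set.Finite.pi fun _ => Set.finite_Iic _
  · intro z hz k _
    have hd := deg_mem hz
    have : z k ≤ deg z := Finset.single_le_sum (f := z) (fun _ _ => Nat.zero_le _)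
      (Finset.mem_univ k)
    simpa [Set.mem_Iic] using hd ▸ this

/-- Support invariance: if `u` vanishes at indices `≥ m`, so does every element of `B(u)`. -/
theorem support_mem {u z : Fin n → ℕ} {m : Fin n} (hu : ∀ k, m ≤ k → u k = 0)
    (hz : z ∈ borelSet u) : ∀ k, m ≤ k → z k = 0 := by
  rw [borelSet_eq_BC] at hz
  induction hz with
  | base => exact hu
  | step i j hij hj hw ih =>
    intro k hk
    have hjm : ¬ m ≤ j := fun h => by have := ih j h; omega
    have hik : k ≠ i := by
      intro h; subst h
      exact hjm (le_trans hk hij)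
    have hjk : k ≠ j := fun h => hjm (h ▸ hk)
    simp [move, hik, hjk, ih k hk]

end Core

section Main
variable {n : ℕ}

theorem move_add_single {n : ℕ} (w : Fin n → ℕ) (i j a : Fin n) (hj : 1 ≤ w j) (s : ℕ) :
    move w i j + Pi.single a s = move (w + Pi.single a s) i j := by
  funext k
  simp only [move, Pi.add_apply, Pi.single_apply]
  rcases eq_or_ne k a with rfl | h1 <;> rcases eq_or_ne k i with rfl | h2 <;>
    rcases eq_or_ne k j with h3 | h3 <;>
    first | (subst h3; simp [*] <;> omega) | (simp [*] <;> omega)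

/-- Lemma A: multiplying by a variable `x_a` with `a ≤ mp` sends `B(p)` into `B(p·x_mp)`. -/
theorem lemA {p z : Fin n → ℕ} {mp : Fin n} (hz : z ∈ borelSet p) {a : Fin n} (ha : a ≤ mp) :
    z + Pi.single a 1 ∈ borelSet (p + Pi.single mp 1) := by
  rw [borelSet_eq_BC] at hz
  induction hz generalizing a with
  | base =>
    have h1 : (1:ℕ) ≤ (p + Pi.single mp 1 : Fin n → ℕ) mp := by simp
    have hmv := borelSet_stable (p + Pi.single mp 1) _ (mem_borelSet_self _) a mp ha h1
    have key : p + Pi.single a 1 = move (p + Pi.single mp 1) a mp := by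
      funext k
      simp only [move, Pi.add_apply, Pi.single_apply]
      rcases eq_or_ne k a with rfl | h1 <;> rcases eq_or_ne k mp with rfl | h2 <;>
        simp [*] <;> omega
    rw [key]; exact hmv
  | @step w i j hij hj hw ih =>
    rw [move_add_single w i j a hj 1]
    refine borelSet_stable _ _ (ih ha) i j hij ?_
    simp only [Pi.add_apply, Pi.single_apply]
    split_ifs <;> omega

/-- The chain: `v·x_mp^t·x_m^(r-t) ∈ B(v·x_m^r)` for `t ≤ r`. -/
theorem chain {v : Fin n → ℕ} {m mp : Fin n} (hv : v m = 0) (hne : mp < m) (r : ℕ)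
    (t : ℕ) (ht : t ≤ r) :
    v + Pi.single mp t + Pi.single m (r - t) ∈ borelSet (v + Pi.single m r) := by
  induction t with
  | zero => simpa using mem_borelSet_self (v + Pi.single m r)
  | succ t ih =>
    have ht' : t ≤ r := Nat.le_of_succ_le ht
    have hmm : mp ≠ m := ne_of_lt hne
    have h1 : (1:ℕ) ≤ (v + Pi.single mp t + Pi.single m (r - t) : Fin n → ℕ) m := by
      simp [Pi.single_apply, Ne.symm hmm, hv]
      omega
    have hmv := borelSet_stable _ _ (ih ht') mp m (le_of_lt hne) h1
    have key : v + Pi.single mp (t+1) + Pi.single m (r-(t+1))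
        = move (v + Pi.single mp t + Pi.single m (r-t)) mp m := by
      funext k
      simp only [move, Pi.add_apply, Pi.single_apply]
      rcases eq_or_ne k mp with rfl | h2
      · simp [hmm]; omega
      · rcases eq_or_ne k m with rfl | h3
        · simp [Ne.symm hmm, hv, h2]; omega
        · simp [h2, h3]
    rw [key]; exact hmv

end Main

section Big
variable {n : ℕ}

theorem move_self (w : Fin n → ℕ) (a : Fin n) : move w a a = w := by
  funext k; simp [move]

theorem move_down {z : Fin n → ℕ} {m a : Fin n} (hzm : z m = 0) (ha : a ≠ m) (i : ℕ)
    (hi : 1 ≤ i) :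
    move (z + Pi.single m i) a m = z + Pi.single a 1 + Pi.single m (i - 1) := by
  funext k
  simp only [move, Pi.add_apply, Pi.single_apply]
  rcases eq_or_ne k a with rfl | h1 <;> rcases eq_or_ne k m with rfl | h2 <;>
    simp [*] <;> omega

/-- forward: each piece is inside `B(v·x_m^r)`. -/
theorem piece_sub {v : Fin n → ℕ} {m mp : Fin n} (hv : ∀ k, m ≤ k → v k = 0)
    (hne : mp < m) {r i : ℕ} (hi : i ≤ r) {z : Fin n → ℕ}
    (hz : z ∈ borelSet (v + Pi.single mp (r - i))) :
    z + Pi.single m i ∈ borelSet (v + Pi.single m r) := by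
  have hps : ∀ k, m ≤ k → (v + Pi.single mp (r - i) : Fin n → ℕ) k = 0 := by
    intro k hk
    have : k ≠ mp := fun h => absurd (h ▸ hk) (not_le.mpr (h ▸ hne))
    simp [Pi.single_apply, this, hv k hk]
  rw [borelSet_eq_BC] at hz
  induction hz with
  | base =>
    have := chain (hv m le_rfl) hne r (r - i) (Nat.sub_le r i)
    have hri : r - (r - i) = i := Nat.sub_sub_self hi
    rwa [hri] at this
  | @step w a b hab hb hw ih =>
    have hwsup : ∀ k, m ≤ k → w k = 0 :=
      support_mem hps (by rw [borelSet_eq_BC]; exact hw)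
    have hbm : ¬ m ≤ b := fun h => by have := hwsup b h; omega
    rw [move_add_single w a b m hb i]
    refine borelSet_stable _ _ ih a b hab ?_
    have : b ≠ m := fun h => hbm (h ▸ le_rfl)
    simp [Pi.single_apply, this]
    omega

/-- reverse: `B(v·x_m^r)` is inside the union of the pieces. -/
theorem union_sub {v : Fin n → ℕ} {m mp : Fin n} (hv : ∀ k, m ≤ k → v k = 0)
    (hne : mp < m) (hmp : (mp : ℕ) = (m : ℕ) - 1) {r : ℕ} {w : Fin n → ℕ}
    (hw : w ∈ borelSet (v + Pi.single m r)) :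
    ∃ i ≤ r, ∃ z ∈ borelSet (v + Pi.single mp (r - i)), w = z + Pi.single m i := by
  rw [borelSet_eq_BC] at hw
  induction hw with
  | base =>
    exact ⟨r, le_rfl, v, by simpa using mem_borelSet_self v, by simp⟩
  | @step w a b hab hb hw ih =>
    obtain ⟨i, hi, z, hz, rfl⟩ := ih
    have hps : ∀ k, m ≤ k → (v + Pi.single mp (r - i) : Fin n → ℕ) k = 0 := by
      intro k hk
      have : k ≠ mp := fun h => absurd (h ▸ hk) (not_le.mpr (h ▸ hne))
      simp [Pi.single_apply, this, hv k hk]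
    have hzsup : ∀ k, m ≤ k → z k = 0 := support_mem hps hz
    have hzm : z m = 0 := hzsup m le_rfl
    rcases eq_or_ne b m with rfl | hbm
    · -- b = m
      have hwb : (z + Pi.single b i : Fin n → ℕ) b = i := by simp [hzm]
      have hi1 : 1 ≤ i := by rw [hwb] at hb; exact hb
      rcases eq_or_ne a b with rfl | ham
      · rw [move_self]
        exact ⟨i, hi, z, hz, rfl⟩
      · have haval : (a : ℕ) < (b : ℕ) := lt_of_le_of_ne (by exact_mod_cast hab)
          (fun h => ham (Fin.ext h))
      -- a ≤ mp
        have hamp : a ≤ mp := by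
          rw [Fin.le_def, hmp]; exact Nat.le_sub_one_of_lt haval
        have hz' : z + Pi.single a 1 ∈ borelSet (v + Pi.single mp (r - i) + Pi.single mp 1) :=
          lemA hz hamp
        have hrw : v + Pi.single mp (r - i) + Pi.single mp 1
            = v + Pi.single mp (r - (i - 1)) := by
          have harith : r - i + 1 = r - (i - 1) := by omega
          rw [add_assoc, ← Pi.single_add, harith]
        rw [hrw] at hz'
        rw [move_down hzm ham i hi1]
        exact ⟨i - 1, le_trans (Nat.sub_le i 1) hi, z + Pi.single a 1, hz', rfl⟩
    · -- b ≠ m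
      have hzb : 1 ≤ z b := by
        have : (z + Pi.single m i : Fin n → ℕ) b = z b := by simp [Pi.single_apply, hbm]
        rwa [this] at hb
      rw [← move_add_single z a b m hzb i]
      exact ⟨i, hi, move z a b,
        borelSet_stable _ _ hz a b hab hzb, rfl⟩

theorem piece_m_coord {v : Fin n → ℕ} {m mp : Fin n} (hv : ∀ k, m ≤ k → v k = 0)
    (hne : mp < m) {r i : ℕ} {z : Fin n → ℕ}
    (hz : z ∈ borelSet (v + Pi.single mp (r - i))) : (z + Pi.single m i : Fin n → ℕ) m = i := by
  have hps : ∀ k, m ≤ k → (v + Pi.single mp (r - i) : Fin n → ℕ) k = 0 := by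
    intro k hk
    have : k ≠ mp := fun h => absurd (h ▸ hk) (not_le.mpr (h ▸ hne))
    simp [Pi.single_apply, this, hv k hk]
  have := support_mem hps hz m le_rfl
  simp [this]

/-- ncard of a pairwise-disjoint finite union. -/
theorem ncard_disj_biUnion {α : Type*} (s : Finset ℕ) (f : ℕ → Set α)
    (hfin : ∀ i ∈ s, (f i).Finite)
    (hdisj : ∀ i ∈ s, ∀ j ∈ s, i ≠ j → Disjoint (f i) (f j)) :
    (⋃ i ∈ s, f i).ncard = ∑ i ∈ s, (f i).ncard := by
  classical
  induction s using Finset.induction_on with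
  | empty => simp
  | @insert a s ha ih =>
    rw [Finset.set_biUnion_insert, Finset.sum_insert ha]
    have hfin' : (⋃ i ∈ s, f i).Finite :=
      Set.Finite.biUnion s.finite_toSet (fun i hi => hfin i (Finset.mem_insert_of_mem hi))
    rw [Set.ncard_union_eq ?_ (hfin a (Finset.mem_insert_self a s)) hfin',
      ih (fun i hi => hfin i (Finset.mem_insert_of_mem hi))
        (fun i hi j hj => hdisj i (Finset.mem_insert_of_mem hi) j (Finset.mem_insert_of_mem hj))]
    · rw [Set.disjoint_iUnion₂_right]
      intro i hi
      exact hdisj a (Finset.mem_insert_self a s) i (Finset.mem_insert_of_mem hi)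
        (fun h => ha (h ▸ hi))

end Big

/-- for `u = v·x_m^r` with `m = max(u) ≥ 2`, `r ≥ 1` and `x_m ∤ v`,
`B(u)` is the disjoint union of the sets `B(v·x_{m-1}^{r-i})·x_m^i` for `0 ≤ i ≤ r`,
and consequently `|B(u)| = Σ_{i=0}^r |B(v·x_{m-1}^{r-i})|`. -/
theorem stmt10 {n : ℕ} (u v : Fin n → ℕ) (m : Fin n) (hm : maxIdx u = (m : ℕ) + 1)
    (hm2 : 1 ≤ (m : ℕ)) (r : ℕ) (hr : 1 ≤ r)
    (hu : u = v + Pi.single m r) (hv : v m = 0)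
    (mp : Fin n) (hmp : (mp : ℕ) = (m : ℕ) - 1) :
    (borelSet u = ⋃ i ∈ Finset.range (r + 1),
        (fun z => z + Pi.single m i) '' borelSet (v + Pi.single mp (r - i)))
    ∧ (∀ i ≤ r, ∀ j ≤ r, i ≠ j →
        Disjoint ((fun z => z + Pi.single m i) '' borelSet (v + Pi.single mp (r - i)))
                 ((fun z => z + Pi.single m j) '' borelSet (v + Pi.single mp (r - j))))
    ∧ (borelSet u).ncard
        = ∑ i ∈ Finset.range (r + 1), (borelSet (v + Pi.single mp (r - i))).ncard := by
  have hvs : ∀ k : Fin n, m ≤ k → v k = 0 := by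
    intro k hk
    rcases eq_or_lt_of_le hk with rfl | hlt
    · exact hv
    · have hkm : k ≠ m := (ne_of_gt hlt)
      have huk : u k = v k := by simp [hu, Pi.single_apply, hkm]
      by_contra h
      have hk0 : 0 < u k := by rw [huk]; omega
      have hle : (k:ℕ)+1 ≤ maxIdx u := by
        refine Finset.le_sup (f := fun i : Fin n => (i:ℕ)+1) ?_
        simp [hk0]
      rw [hm] at hle
      have hmk : (m:ℕ) < (k:ℕ) := Fin.lt_def.mp hlt
      omega
  have hne : mp < m := Fin.lt_def.mpr (by rw [hmp]; omega)
  subst hu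
  have heq : borelSet (v + Pi.single m r) = ⋃ i ∈ Finset.range (r + 1),
      (fun z => z + Pi.single m i) '' borelSet (v + Pi.single mp (r - i)) := by
    ext w
    simp only [Set.mem_iUnion, Finset.mem_range, Set.mem_image]
    constructor
    · intro hw
      obtain ⟨i, hi, z, hz, hzw⟩ := union_sub hvs hne hmp hw
      exact ⟨i, Nat.lt_succ_of_le hi, z, hz, hzw.symm⟩
    · rintro ⟨i, hir, z, hz, rfl⟩
      exact piece_sub hvs hne (Nat.lt_succ_iff.mp hir) hz
  have hdis : ∀ i ≤ r, ∀ j ≤ r, i ≠ j →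
      Disjoint ((fun z => z + Pi.single m i) '' borelSet (v + Pi.single mp (r - i)))
               ((fun z => z + Pi.single m j) '' borelSet (v + Pi.single mp (r - j))) := by
    intro i _ j _ hij
    rw [Set.disjoint_left]
    rintro w ⟨z1, hz1, rfl⟩ ⟨z2, hz2, heq2⟩
    apply hij
    have e1 := piece_m_coord hvs hne hz1
    have e2 := piece_m_coord hvs hne hz2
    simp only at heq2
    rw [heq2] at e2
    rw [e1] at e2
    exact e2
  refine ⟨heq, hdis, ?_⟩
  rw [heq, ncard_disj_biUnion]
  · exact Finset.sum_congr rfl fun i _ =>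
      Set.ncard_image_of_injective _ (add_left_injective _)
  · exact fun i _ => Set.Finite.image _ (borelSet_finite _)
  · intro i hi j hj hij
    exact hdis i (Nat.lt_succ_iff.mp (Finset.mem_range.mp hi))
      j (Nat.lt_succ_iff.mp (Finset.mem_range.mp hj)) hij
end

section
/- Let u = x_{i_1}···x_{i_d} and v = x_{j_1}···x_{j_d} be degree-d monomials in n variables with i_1 ≤ ... ≤ i_d and j_1 ≤ ... ≤ j_d. Then v ∈ L(u) \ B(u) if and only if there exist indices 1 ≤ s < t ≤ d such that (j_1,...,j_{s−1}) = (i_1,...,i_{s−1}), j_s < i_s, and j_t > i_t. -/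
/-- The exponent vector of the monomial `x_{f 0} ⋯ x_{f (d-1)}`. -/
def expo {n d : ℕ} (f : Fin d → Fin n) : Fin n → ℕ :=
  fun k => (Finset.univ.filter fun t : Fin d => f t = k).card


/-! ### Auxiliary development -/

/-- Cumulative sum of an exponent vector up to index `k`. -/
def cum {n : ℕ} (v : Fin n → ℕ) (k : Fin n) : ℕ :=
  ∑ m ∈ Finset.univ.filter (· ≤ k), v m

lemma move_sum {n : ℕ} (v : Fin n → ℕ) (a b : Fin n) (hb : 1 ≤ v b)
    (s : Finset (Fin n)) :
    ∑ m ∈ s, move v a b m + (if b ∈ s then 1 else 0)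
      = ∑ m ∈ s, v m + (if a ∈ s then 1 else 0) := by
  rw [← Finset.sum_ite_eq' s b (fun _ => 1), ← Finset.sum_ite_eq' s a (fun _ => 1),
    ← Finset.sum_add_distrib, ← Finset.sum_add_distrib]
  refine Finset.sum_congr rfl (fun m _ => ?_)
  by_cases h2 : m = b
  · subst h2
    by_cases h1 : m = a
    · subst h1; simp [move]
    · simp [move, h1]; omega
  · by_cases h1 : m = a
    · subst h1; simp [move, h2]
    · simp [move, h1, h2]

lemma deg_move_s12 {n : ℕ} (v : Fin n → ℕ) (a b : Fin n) (hb : 1 ≤ v b) :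
    deg (move v a b) = deg v := by
  have := move_sum v a b hb Finset.univ
  simp only [Finset.mem_univ, if_true] at this
  unfold deg
  omega

lemma cum_move {n : ℕ} (v : Fin n → ℕ) (a b : Fin n) (hab : a ≤ b) (hb : 1 ≤ v b)
    (k : Fin n) : cum v k ≤ cum (move v a b) k := by
  have := move_sum v a b hb (Finset.univ.filter (· ≤ k))
  simp only [Finset.mem_filter, Finset.mem_univ, true_and] at this
  unfold cum
  by_cases h1 : b ≤ k
  · have h2 : a ≤ k := le_trans hab h1
    simp [h1, h2] at this; omega
  · by_cases h2 : a ≤ k <;> simp [h1, h2] at this <;> omega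

lemma self_mem_borelSet {n : ℕ} (u : Fin n → ℕ) : u ∈ borelSet u := by
  intro B hB; exact hB.2

lemma borelStable_borelSet {n : ℕ} (u : Fin n → ℕ) : BorelStable (borelSet u) := by
  intro v hv a b hab hb B hB
  exact hB.1 v (hv B hB) a b hab hb

lemma borelSet_subset_dom {n : ℕ} (u : Fin n → ℕ) :
    borelSet u ⊆ {v | deg v = deg u ∧ ∀ k, cum u k ≤ cum v k} := by
  apply Set.sInter_subset_of_mem
  constructor
  · intro v hv a b hab hb
    refine ⟨by rw [deg_move_s12 v a b hb, hv.1], fun k => le_trans (hv.2 k) (cum_move v a b hab hb k)⟩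
  · exact ⟨rfl, fun k => le_refl _⟩

lemma filter_le_eq_insert {n : ℕ} (k : Fin n) :
    Finset.univ.filter (· ≤ k) = insert k (Finset.univ.filter (· < k)) := by
  ext m
  simp only [Finset.mem_filter, Finset.mem_univ, true_and, Finset.mem_insert]
  constructor
  · intro h; rcases lt_or_eq_of_le h with h | h
    · exact Or.inr h
    · exact Or.inl h
  · rintro (h | h)
    · exact le_of_eq h
    · exact le_of_lt h

lemma cum_split {n : ℕ} (v : Fin n → ℕ) (k : Fin n) :
    cum v k = v k + ∑ m ∈ Finset.univ.filter (· < k), v m := by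
  unfold cum
  rw [filter_le_eq_insert, Finset.sum_insert (by simp)]

lemma coord_eq_of_cum_eq_below {n : ℕ} (v u : Fin n → ℕ) (a : Fin n)
    (h : ∀ k, k < a → cum v k = cum u k) : ∀ m, m < a → v m = u m := by
  have key : ∀ N : ℕ, ∀ m : Fin n, (m : ℕ) = N → m < a → v m = u m := by
    intro N
    induction N using Nat.strong_induction_on with
    | _ N IH =>
      intro m hm hma
      have h1 := h m hma
      rw [cum_split, cum_split] at h1
      have h2 : ∑ x ∈ Finset.univ.filter (· < m), v x
          = ∑ x ∈ Finset.univ.filter (· < m), u x := by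
        refine Finset.sum_congr rfl (fun x hx => ?_)
        simp only [Finset.mem_filter, Finset.mem_univ, true_and] at hx
        exact IH x (by omega) x rfl (lt_trans hx hma)
      omega
  exact fun m hm => key m m rfl hm

lemma eq_of_cum_eq {n : ℕ} (v u : Fin n → ℕ) (h : ∀ k, cum v k = cum u k) : v = u := by
  have key : ∀ N : ℕ, ∀ m : Fin n, (m : ℕ) = N → v m = u m := by
    intro N
    induction N using Nat.strong_induction_on with
    | _ N IH =>
      intro m hm
      have h1 := h m
      rw [cum_split, cum_split] at h1
      have h2 : ∑ x ∈ Finset.univ.filter (· < m), v x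
          = ∑ x ∈ Finset.univ.filter (· < m), u x := by
        refine Finset.sum_congr rfl (fun x hx => ?_)
        simp only [Finset.mem_filter, Finset.mem_univ, true_and] at hx
        exact IH x (by omega) x rfl
      omega
  funext m; exact key m m rfl

lemma dom_mem_borelSet {n : ℕ} (u : Fin n → ℕ) :
    ∀ N : ℕ, ∀ v : Fin n → ℕ, (∑ k, (cum v k - cum u k)) = N →
      deg v = deg u → (∀ k, cum u k ≤ cum v k) → v ∈ borelSet u := by
  intro N
  induction N using Nat.strong_induction_on with
  | _ N IH =>
    intro v hN hdeg hdom
    by_cases hvu : ∀ k, cum v k = cum u k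
    · rw [eq_of_cum_eq v u hvu]; exact self_mem_borelSet u
    · push_neg at hvu
      obtain ⟨k0, hk0⟩ := hvu
      -- the set of indices where cum v exceeds cum u
      have hAne : (Finset.univ.filter (fun k => cum u k < cum v k)).Nonempty :=
        ⟨k0, by simp; exact lt_of_le_of_ne (hdom k0) (fun h => hk0 h.symm)⟩
      set a := (Finset.univ.filter (fun k => cum u k < cum v k)).min' hAne with ha_def
      have ha : cum u a < cum v a := by
        have := Finset.min'_mem _ hAne
        simpa using this
      have hamin : ∀ k, k < a → cum v k = cum u k := by
        intro k hk
        by_contra hne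
        have hkA : k ∈ Finset.univ.filter (fun k => cum u k < cum v k) := by
          simp; exact lt_of_le_of_ne (hdom k) (fun h => hne h.symm)
        exact absurd (Finset.min'_le _ _ hkA) (not_le.mpr hk)
      have hn : 0 < n := a.pos
      set top : Fin n := ⟨n - 1, by omega⟩ with htop_def
      have htople : ∀ k : Fin n, k ≤ top := by
        intro k; rw [Fin.le_def]; simp only [htop_def]; omega
      have cumtop : ∀ w : Fin n → ℕ, cum w top = deg w := by
        intro w; unfold cum deg
        congr 1
        ext m; simp [htople m]
      have hatop : a ≠ top := by
        intro h
        rw [h, cumtop, cumtop, hdeg] at ha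
        omega
      have hBne : (Finset.univ.filter (fun m => a < m ∧ cum v m = cum u m)).Nonempty := by
        refine ⟨top, ?_⟩
        simp only [Finset.mem_filter, Finset.mem_univ, true_and]
        exact ⟨lt_of_le_of_ne (htople a) hatop, by rw [cumtop, cumtop, hdeg]⟩
      set b := (Finset.univ.filter (fun m => a < m ∧ cum v m = cum u m)).min' hBne with hb_def
      have hbprop : a < b ∧ cum v b = cum u b := by
        have := Finset.min'_mem _ hBne
        rw [Finset.mem_filter] at this
        exact this.2
      have hab : a < b := hbprop.1
      have hmid : ∀ k, a ≤ k → k < b → cum u k < cum v k := by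
        intro k hak hkb
        rcases lt_or_eq_of_le hak with h | h
        · by_contra hle
          have hk : cum v k = cum u k := le_antisymm (not_lt.mp hle) (hdom k)
          have hkB : k ∈ Finset.univ.filter (fun m => a < m ∧ cum v m = cum u m) := by
            simp [h, hk]
          exact absurd (Finset.min'_le _ _ hkB) (not_le.mpr hkb)
        · rw [← h]; exact ha
      -- v a ≥ 1
      have hva : 1 ≤ v a := by
        have hcoord := coord_eq_of_cum_eq_below v u a hamin
        have h1 := cum_split v a
        have h2 := cum_split u a
        have h3 : ∑ x ∈ Finset.univ.filter (· < a), v x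
            = ∑ x ∈ Finset.univ.filter (· < a), u x := by
          refine Finset.sum_congr rfl (fun x hx => ?_)
          simp only [Finset.mem_filter, Finset.mem_univ, true_and] at hx
          exact hcoord x hx
        omega
      have hne_ab : ¬ (b = a) := fun h => absurd h.symm (ne_of_lt hab)
      set v' : Fin n → ℕ := fun k => v k - (if k = a then 1 else 0) + (if k = b then 1 else 0)
        with hv'_def
      have hv'sum : ∀ s : Finset (Fin n),
          ∑ m ∈ s, v' m + (if a ∈ s then 1 else 0)
            = ∑ m ∈ s, v m + (if b ∈ s then 1 else 0) := by
        intro s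
        rw [← Finset.sum_ite_eq' s a (fun _ => 1), ← Finset.sum_ite_eq' s b (fun _ => 1),
          ← Finset.sum_add_distrib, ← Finset.sum_add_distrib]
        refine Finset.sum_congr rfl (fun m _ => ?_)
        by_cases h2 : m = b
        · subst h2
          simp [hv'_def, hne_ab]
        · by_cases h1 : m = a
          · subst h1
            simp [hv'_def, h2]
            omega
          · simp [hv'_def, h1, h2]
      have hmove : move v' a b = v := by
        funext k
        by_cases h2 : k = b
        · subst h2
          simp [move, hv'_def, hne_ab]
        · by_cases h1 : k = a
          · subst h1
            simp [move, hv'_def, h2]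
            omega
          · simp [move, hv'_def, h1, h2]
      have hv'b : 1 ≤ v' b := by
        simp [hv'_def, hne_ab]
      have hdeg' : deg v' = deg u := by
        have := hv'sum Finset.univ
        simp only [Finset.mem_univ, if_true] at this
        unfold deg
        unfold deg at hdeg
        omega
      have hcum' : ∀ k, cum v' k + (if a ≤ k then 1 else 0)
          = cum v k + (if b ≤ k then 1 else 0) := by
        intro k
        have := hv'sum (Finset.univ.filter (· ≤ k))
        simp only [Finset.mem_filter, Finset.mem_univ, true_and] at this
        unfold cum
        exact this
      have hdom' : ∀ k, cum u k ≤ cum v' k := by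
        intro k
        have h1 := hcum' k
        by_cases hbk : b ≤ k
        · have hak : a ≤ k := le_trans (le_of_lt hab) hbk
          have := hdom k
          simp [hbk, hak] at h1; omega
        · by_cases hak : a ≤ k
          · have := hmid k hak (not_le.mp hbk)
            simp [hbk, hak] at h1; omega
          · have := hdom k
            simp [hbk, hak] at h1; omega
      have hle' : ∀ k, cum v' k ≤ cum v k := by
        intro k
        have h1 := hcum' k
        by_cases hbk : b ≤ k
        · have hak : a ≤ k := le_trans (le_of_lt hab) hbk
          simp [hbk, hak] at h1; omega
        · by_cases hak : a ≤ k <;> simp [hbk, hak] at h1 <;> omega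
      have hstrict : cum v' a < cum v a := by
        have h1 := hcum' a
        have hba : ¬ (b ≤ a) := not_le.mpr hab
        simp [hba] at h1
        omega
      have hNlt : (∑ k, (cum v' k - cum u k)) < N := by
        rw [← hN]
        refine Finset.sum_lt_sum (fun k _ => by have := hle' k; have := hdom' k; omega)
          ⟨a, Finset.mem_univ a, by have := hdom' a; omega⟩
      have hv'mem := IH _ hNlt v' rfl hdeg' hdom'
      rw [← hmove]
      exact borelStable_borelSet u v' hv'mem a b (le_of_lt hab) hv'b

/-- Characterization of the Borel set by cumulative dominance. -/
lemma borelSet_char {n : ℕ} (u : Fin n → ℕ) :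
    borelSet u = {v | deg v = deg u ∧ ∀ k, cum u k ≤ cum v k} := by
  apply Set.Subset.antisymm (borelSet_subset_dom u)
  intro v hv
  exact dom_mem_borelSet u _ v rfl hv.1 hv.2

/-! ### Combinatorics of `expo` -/

lemma deg_expo {n d : ℕ} (f : Fin d → Fin n) : deg (expo f) = d := by
  unfold deg expo
  rw [← Finset.card_eq_sum_card_fiberwise (fun x _ => Finset.mem_univ (f x))]
  simp

lemma cum_expo {n d : ℕ} (f : Fin d → Fin n) (k : Fin n) :
    cum (expo f) k = (Finset.univ.filter fun t => f t ≤ k).card := by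
  unfold cum expo
  rw [Finset.card_eq_sum_card_fiberwise
    (f := f) (t := Finset.univ.filter (· ≤ k))
    (fun x hx => by simp only [Finset.mem_coe, Finset.mem_filter, Finset.mem_univ, true_and] at hx ⊢; exact hx)]
  refine Finset.sum_congr rfl (fun m hm => ?_)
  simp only [Finset.mem_filter, Finset.mem_univ, true_and] at hm
  congr 1
  ext t
  simp only [Finset.mem_filter, Finset.mem_univ, true_and]
  constructor
  · intro h; exact ⟨le_trans (le_of_eq h) hm, h⟩
  · intro h; exact h.2

lemma mono_le_iff {n d : ℕ} {f : Fin d → Fin n} (hf : Monotone f) (t : Fin d) (k : Fin n) :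
    f t ≤ k ↔ (t : ℕ) < (Finset.univ.filter fun r => f r ≤ k).card := by
  constructor
  · intro h
    have hsub : Finset.Iic t ⊆ Finset.univ.filter fun r => f r ≤ k := by
      intro r hr
      simp only [Finset.mem_Iic] at hr
      simp only [Finset.mem_filter, Finset.mem_univ, true_and]
      exact le_trans (hf hr) h
    have := Finset.card_le_card hsub
    rw [Fin.card_Iic] at this
    omega
  · intro h
    by_contra hc
    have hkf : k < f t := not_le.mp hc
    have hsub : (Finset.univ.filter fun r => f r ≤ k) ⊆ Finset.Iio t := by
      intro r hr
      simp only [Finset.mem_filter, Finset.mem_univ, true_and] at hr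
      simp only [Finset.mem_Iio]
      by_contra hrt
      exact absurd (le_trans (hf (not_lt.mp hrt)) hr) (not_le.mpr hkf)
    have := Finset.card_le_card hsub
    rw [Fin.card_Iio] at this
    omega

lemma dom_iff_pointwise {n d : ℕ} {i j : Fin d → Fin n} (hi : Monotone i) (hj : Monotone j) :
    (∀ k, cum (expo i) k ≤ cum (expo j) k) ↔ ∀ t, j t ≤ i t := by
  constructor
  · intro h t
    rw [mono_le_iff hj t (i t), ← cum_expo]
    calc (t : ℕ) < (Finset.univ.filter fun r => i r ≤ i t).card :=
          (mono_le_iff hi t (i t)).mp (le_refl _)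
      _ = cum (expo i) (i t) := (cum_expo i (i t)).symm
      _ ≤ cum (expo j) (i t) := h (i t)
  · intro h k
    rw [cum_expo, cum_expo]
    apply Finset.card_le_card
    intro t ht
    simp only [Finset.mem_filter, Finset.mem_univ, true_and] at ht ⊢
    exact le_trans (h t) ht

lemma lexGT_expo_of {n d : ℕ} {f g : Fin d → Fin n} (hf : Monotone f) (hg : Monotone g)
    (s : Fin d) (hpre : ∀ r, r < s → f r = g r) (hs : f s < g s) :
    LexGT (expo f) (expo g) := by
  refine ⟨f s, ?_, ?_⟩
  · intro m hm
    unfold expo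
    congr 1
    ext t
    simp only [Finset.mem_filter, Finset.mem_univ, true_and]
    constructor
    · intro h
      have hts : t < s := by
        by_contra hc
        have := hf (not_lt.mp hc)
        rw [h] at this
        exact absurd (lt_of_le_of_lt this hm) (lt_irrefl _)
      rw [← hpre t hts]; exact h
    · intro h
      have hts : t < s := by
        by_contra hc
        have := hg (not_lt.mp hc)
        rw [h] at this
        exact absurd (lt_of_le_of_lt this (lt_trans hm hs)) (lt_irrefl _)
      rw [hpre t hts]; exact h
  · unfold expo
    apply Finset.card_lt_card
    constructor
    · intro t ht
      simp only [Finset.mem_filter, Finset.mem_univ, true_and] at ht ⊢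
      have hts : t < s := by
        by_contra hc
        have := hg (not_lt.mp hc)
        rw [ht] at this
        exact absurd (lt_of_le_of_lt this hs) (lt_irrefl _)
      rw [hpre t hts]; exact ht
    · intro hsub
      have hsmem : s ∈ Finset.univ.filter fun t => f t = f s := by simp
      have := hsub hsmem
      simp only [Finset.mem_filter, Finset.mem_univ, true_and] at this
      exact absurd this (ne_of_gt hs)

lemma lexGT_asymm {n : ℕ} {a b : Fin n → ℕ} (h1 : LexGT a b) (h2 : LexGT b a) : False := by
  obtain ⟨k1, hk1, hk1'⟩ := h1
  obtain ⟨k2, hk2, hk2'⟩ := h2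
  rcases lt_trichotomy k1 k2 with h | h | h
  · have := hk2 k1 h; omega
  · subst h; omega
  · have := hk1 k2 h; omega

lemma lexGT_irrefl {n : ℕ} {a : Fin n → ℕ} (h : LexGT a a) : False := by
  obtain ⟨k, _, hk⟩ := h; omega

lemma expo_inj {n d : ℕ} {f g : Fin d → Fin n} (hf : Monotone f) (hg : Monotone g)
    (h : expo f = expo g) : f = g := by
  by_contra hne
  have hDne : (Finset.univ.filter fun t => f t ≠ g t).Nonempty := by
    rw [Finset.filter_nonempty_iff]
    by_contra hc
    push_neg at hc
    exact hne (funext fun t => hc t (Finset.mem_univ t))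
  set s := (Finset.univ.filter fun t => f t ≠ g t).min' hDne with hs_def
  have hsne : f s ≠ g s := by
    have := Finset.min'_mem _ hDne
    simpa using this
  have hpre : ∀ r, r < s → f r = g r := by
    intro r hr
    by_contra hc
    have hrmem : r ∈ Finset.univ.filter fun t => f t ≠ g t := by simpa using hc
    exact absurd (Finset.min'_le _ _ hrmem) (not_le.mpr hr)
  rcases lt_or_gt_of_ne hsne with hlt | hgt
  · have := lexGT_expo_of hf hg s hpre hlt
    rw [h] at this
    exact lexGT_irrefl this
  · have := lexGT_expo_of hg hf s (fun r hr => (hpre r hr).symm) hgt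
    rw [h] at this
    exact lexGT_irrefl this

lemma lexGT_expo_iff {n d : ℕ} {i j : Fin d → Fin n} (hi : Monotone i) (hj : Monotone j) :
    LexGT (expo j) (expo i) ↔ ∃ s, (∀ r, r < s → j r = i r) ∧ j s < i s := by
  constructor
  · intro h
    have hne : j ≠ i := by
      intro he; subst he; exact lexGT_irrefl h
    have hDne : (Finset.univ.filter fun t => j t ≠ i t).Nonempty := by
      rw [Finset.filter_nonempty_iff]
      by_contra hc
      push_neg at hc
      exact hne (funext fun t => hc t (Finset.mem_univ t))
    set s := (Finset.univ.filter fun t => j t ≠ i t).min' hDne with hs_def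
    have hsne : j s ≠ i s := by
      have := Finset.min'_mem _ hDne
      simpa using this
    have hpre : ∀ r, r < s → j r = i r := by
      intro r hr
      by_contra hc
      have hrmem : r ∈ Finset.univ.filter fun t => j t ≠ i t := by simpa using hc
      exact absurd (Finset.min'_le _ _ hrmem) (not_le.mpr hr)
    refine ⟨s, hpre, ?_⟩
    rcases lt_or_gt_of_ne hsne with hlt | hgt
    · exact hlt
    · exact absurd (lexGT_expo_of hi hj s (fun r hr => (hpre r hr).symm) hgt)
        (fun hc => lexGT_asymm h hc)
  · rintro ⟨s, hpre, hs⟩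
    exact lexGT_expo_of hj hi s hpre hs


/-- with `u = x_{i_1}⋯x_{i_d}`, `v = x_{j_1}⋯x_{j_d}` written with
weakly increasing indices, `v ∈ L(u) \ B(u)` iff there are `s < t` with
`(j_1,…,j_{s-1}) = (i_1,…,i_{s-1})`, `j_s < i_s` and `j_t > i_t`. -/
theorem stmt12 {n d : ℕ} (i j : Fin d → Fin n) (hi : Monotone i) (hj : Monotone j) :
    expo j ∈ Lseg (expo i) \ borelSet (expo i) ↔
      ∃ s t : Fin d, s < t ∧ (∀ r : Fin d, r < s → j r = i r) ∧ j s < i s ∧ i t < j t := by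
  constructor
  · rintro ⟨⟨hdeg, hge⟩, hnb⟩
    rw [borelSet_char] at hnb
    have hnd : ¬ ∀ k, cum (expo i) k ≤ cum (expo j) k := by
      intro hc
      exact hnb ⟨hdeg, hc⟩
    rw [dom_iff_pointwise hi hj] at hnd
    push_neg at hnd
    obtain ⟨t, ht⟩ := hnd
    have ht' : i t < j t := ht
    rcases hge with hgt | heq
    · obtain ⟨s, hpre, hs⟩ := (lexGT_expo_iff hi hj).mp hgt
      refine ⟨s, t, ?_, hpre, hs, ht'⟩
      rcases lt_trichotomy s t with h | h | h
      · exact h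
      · subst h; omega
      · have := hpre t h; omega
    · have := expo_inj hj hi heq
      rw [this] at ht'
      omega
  · rintro ⟨s, t, hst, hpre, hs, ht⟩
    refine ⟨⟨by rw [deg_expo, deg_expo], Or.inl (lexGT_expo_of hj hi s hpre hs)⟩, ?_⟩
    rw [borelSet_char]
    intro hc
    have := (dom_iff_pointwise hi hj).mp hc.2 t
    omega
end

section
/- Let u_1 > u_2 be degree-d monomials in n variables. Then min(μ(u_2, u_1)) > min(u_1), where μ(u_2, u_1) = Π_{u_1 > v ≥ u_2} x_{max(v)} is the maxgen monomial of the lexinterval L*(u_1, u_2). -/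
lemma key {n : ℕ} {u₁ v : Fin n → ℕ} (hd : deg v = deg u₁) (hgt : LexGT u₁ v) :
    minIdx u₁ < maxIdx v := by
  obtain ⟨i, hag, hlt⟩ := hgt
  have hmin : minIdx u₁ ≤ (i : ℕ) + 1 :=
    Nat.sInf_le ⟨i, Nat.pos_of_ne_zero (by omega), rfl⟩
  have hj : ∃ j : Fin n, i < j ∧ 0 < v j := by
    by_contra hcon
    push_neg at hcon
    have hzero : ∀ j : Fin n, ¬ j ≤ i → v j = 0 := fun j hji =>
      Nat.le_antisymm (hcon j (lt_of_not_ge hji)) (Nat.zero_le _)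
    have h2' : deg v = ∑ j ∈ Finset.univ.filter (· ≤ i), v j := by
      refine (Finset.sum_subset (Finset.filter_subset _ _) ?_).symm
      intro j _ hjf
      exact hzero j (by simpa using hjf)
    have h1' : ∑ j ∈ Finset.univ.filter (· ≤ i), v j <
        ∑ j ∈ Finset.univ.filter (· ≤ i), u₁ j := by
      refine Finset.sum_lt_sum ?_ ⟨i, by simp, hlt⟩
      intro j hjf
      rcases lt_or_eq_of_le (by simpa using hjf : j ≤ i) with hji | rfl
      · exact le_of_eq (hag j hji).symm
      · exact le_of_lt hlt
    have h3' : ∑ j ∈ Finset.univ.filter (· ≤ i), u₁ j ≤ deg u₁ :=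
      Finset.sum_le_sum_of_subset (Finset.filter_subset _ _)
    omega
  obtain ⟨j, hij, hvj⟩ := hj
  have hmax : (j : ℕ) + 1 ≤ maxIdx v :=
    Finset.le_sup (f := fun i : Fin n => (i : ℕ) + 1) (by simp [hvj])
  have : (i : ℕ) < (j : ℕ) := hij
  omega

lemma deg_finite {n d : ℕ} : {v : Fin n → ℕ | deg v = d}.Finite := by
  have : {v : Fin n → ℕ | deg v = d} ⊆ Set.pi Set.univ (fun _ : Fin n => Set.Iic d) := by
    intro v hv i _
    have : v i ≤ deg v := Finset.single_le_sum (f := v) (fun _ _ => Nat.zero_le _) (Finset.mem_univ i)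
    simpa [hv.out] using this.trans_eq hv
  exact Set.Finite.subset (Set.Finite.pi fun _ => Set.finite_Iic d) this

/-- if `u₁ >_lex u₂` (same degree) then `min(μ(u₂,u₁)) > min(u₁)`,
where `μ(u₂,u₁) = maxgen(L*(u₁,u₂))`. -/
theorem stmt15 {n d : ℕ} (u₁ u₂ : Fin n → ℕ) (h1 : deg u₁ = d) (h2 : deg u₂ = d)
    (h : LexGT u₁ u₂) : minIdx u₁ < minIdx (maxgen (Lstar u₁ u₂)) := by
  have hu2mem : u₂ ∈ Lstar u₁ u₂ := ⟨by omega, h, Or.inr rfl⟩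
  have hfin : (Lstar u₁ u₂).Finite :=
    Set.Finite.subset (deg_finite (d := d)) (fun v hv => by simpa [h1] using hv.1)
  -- d ≥ 1
  obtain ⟨i₀, -, hlt₀⟩ := h
  have hd1 : 1 ≤ deg u₂ := by
    have h5 : u₁ i₀ ≤ deg u₁ := Finset.single_le_sum (f := u₁) (fun _ _ => Nat.zero_le _) (Finset.mem_univ i₀)
    omega
  -- some coordinate of u₂ positive
  have hpos : ∃ i : Fin n, 0 < u₂ i := by
    by_contra hc
    push_neg at hc
    have : deg u₂ = 0 := Finset.sum_eq_zero fun i _ => Nat.le_antisymm (hc i) (Nat.zero_le _)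
    omega
  obtain ⟨ip, hip⟩ := hpos
  -- maxIdx u₂ is attained at some index
  have hne : (Finset.univ.filter fun i : Fin n => 0 < u₂ i).Nonempty := ⟨ip, by simp [hip]⟩
  obtain ⟨i₁, hi₁mem, hi₁⟩ := Finset.exists_mem_eq_sup _ hne (fun i : Fin n => (i : ℕ) + 1)
  -- maxgen positive at i₁
  have hmg : 0 < maxgen (Lstar u₁ u₂) i₁ := by
    have hnonempty : (Lstar u₁ u₂ ∩ {w | maxIdx w = (i₁ : ℕ) + 1}).Nonempty :=
      ⟨u₂, hu2mem, show maxIdx u₂ = (i₁ : ℕ) + 1 from hi₁⟩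
    exact (Set.ncard_pos (hfin.inter_of_left _)).mpr hnonempty
  -- the set defining minIdx (maxgen ...) is nonempty; its sInf is a member
  have hSne : ((i₁ : ℕ) + 1) ∈ {m | ∃ i : Fin n, 0 < maxgen (Lstar u₁ u₂) i ∧ m = (i : ℕ) + 1} :=
    ⟨i₁, hmg, rfl⟩
  have hmem := Nat.sInf_mem (Set.nonempty_of_mem hSne)
  obtain ⟨i₂, hi₂pos, hi₂eq⟩ := hmem
  -- get a witness v with maxIdx v = i₂ + 1
  have hvne : (Lstar u₁ u₂ ∩ {w | maxIdx w = (i₂ : ℕ) + 1}).Nonempty := by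
    by_contra hc
    rw [Set.not_nonempty_iff_eq_empty] at hc
    simp [maxgen, hc] at hi₂pos
  obtain ⟨v, hvL, hvmax⟩ := hvne
  have hk := key (u₁ := u₁) (v := v) hvL.1 hvL.2.1
  have heq : minIdx (maxgen (Lstar u₁ u₂)) = (i₂ : ℕ) + 1 := hi₂eq
  have hvm : maxIdx v = (i₂ : ℕ) + 1 := hvmax
  omega
end
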